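/- arXiv:2209.12972 — 3 statements merged into one kernel-verified Lean document; each statement's English description precedes it below -/
import Mathlib

section
/- If the inverter power injection satisfies p_vsi(s) = -(α_g·s·(τ-ρ))/((sτ+1)(sρ+1))·ω_sm(s), and the machine dynamics are ω_sm(s) = -G_machine(s)·(p_ℓ(s) - p_vsi(s)) with G_machine(s) = (1/(2Hs+α_ℓ))/(1 + (1/(2Hs+α_ℓ))·(-α_g/(τs+1))·(-1)) interpreted as G_machine(s) = (τs+1)/((2Hs+α_ℓ)(τs+1)+α_g), then the closed-loop transfer function from -p_ℓ to ω_sm equals the target (sρ+1)/(2Hρs² + (α_ℓρ+2H)s + (α_ℓ+α_g)). -/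
/-!
Substituting `p_vsi = K ω_sm` into the machine equation gives the feedback loop
`ω_sm = G / (1 - G K) · (-p_ℓ)`. With `D = (2Hs + α_ℓ)(τs + 1) + α_g` and `Q` the target
denominator, the polynomial identity `D (ρs + 1) + α_g s (τ - ρ) = (τs + 1) Q` makes the factor
`τs + 1` cancel from the return difference `1 - G K`, which leaves `(ρs + 1) / Q`. All
denominators are nonzero because their constant terms are `1` or `α_ℓ + α_g`.
-/

open RatFunc

section Field

variable {F : Type*} [Field F]

theorem eq_div_one_sub_mul_of_feedback {g k p ω : F} (h : ω = -g * (p - k * ω))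
    (hgk : 1 - g * k ≠ 0) : ω = g / (1 - g * k) * (-p) := by
  rw [div_mul_eq_mul_div, eq_div_iff hgk]
  linear_combination h

theorem one_sub_div_mul_neg_div_eq {a b c d q : F} (ha : a ≠ 0) (hb : b ≠ 0) (hd : d ≠ 0)
    (hloop : d * b + c = a * q) :
    1 - a / d * (-c / (a * b)) = a * q / (d * b) := by
  rw [← hloop]
  field_simp
  ring

theorem div_one_sub_div_mul_neg_div_eq {a b c d q : F} (ha : a ≠ 0) (hb : b ≠ 0) (hd : d ≠ 0)
    (hq : q ≠ 0) (hloop : d * b + c = a * q) :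
    a / d / (1 - a / d * (-c / (a * b))) = b / q := by
  rw [one_sub_div_mul_neg_div_eq ha hb hd hloop]
  field_simp

end Field

namespace RatFunc

variable {K : Type*} [Field K]

theorem algebraMap_ne_zero_of_eval_zero_ne_zero {p : Polynomial K} (hp : p.eval 0 ≠ 0) :
    algebraMap (Polynomial K) (RatFunc K) p ≠ 0 :=
  algebraMap_ne_zero fun h => hp (by simp [h])

theorem X_mul_C_add_one_ne_zero (a : K) : (X * C a + 1 : RatFunc K) ≠ 0 := by
  have h := algebraMap_ne_zero_of_eval_zero_ne_zero (p := Polynomial.X * Polynomial.C a + 1)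
    (by simp)
  push_cast at h
  exact h

theorem C_mul_X_add_C_mul_add_C_ne_zero {a b c d : K} (hbd : b + d ≠ 0) :
    ((C a * X + C b) * (X * C c + 1) + C d : RatFunc K) ≠ 0 := by
  have h := algebraMap_ne_zero_of_eval_zero_ne_zero
    (p := (Polynomial.C a * Polynomial.X + Polynomial.C b) * (Polynomial.X * Polynomial.C c + 1) +
      Polynomial.C d) (by simpa using hbd)
  push_cast at h
  exact h

theorem C_mul_X_sq_add_C_mul_X_add_C_ne_zero {a b c : K} (hc : c ≠ 0) :
    (C a * X ^ 2 + C b * X + C c : RatFunc K) ≠ 0 := by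
  have h := algebraMap_ne_zero_of_eval_zero_ne_zero
    (p := Polynomial.C a * Polynomial.X ^ 2 + Polynomial.C b * Polynomial.X + Polynomial.C c)
    (by simpa using hc)
  push_cast at h
  exact h

end RatFunc

theorem shaping_denominator_identity {K : Type*} [Field K] (H αℓ αg τ ρ : K) :
    ((C (2 * H) * X + C αℓ) * (X * C τ + 1) + C αg) * (X * C ρ + 1) +
      C αg * X * (C τ - C ρ) =
    (X * C τ + 1) * (C (2 * H * ρ) * X ^ 2 + C (αℓ * ρ + 2 * H) * X + C (αℓ + αg) : RatFunc K) := by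
  simp only [map_mul, map_add, map_ofNat]
  ring

theorem shaping_matches_target_general (H αℓ αg τ ρ : ℝ)
    (hαℓ : 0 < αℓ) (hαg : 0 < αg)
    (pℓ ωsm pvsi : RatFunc ℝ)
    (hpv : pvsi = -(RatFunc.C αg * RatFunc.X * (RatFunc.C τ - RatFunc.C ρ)) /
        ((RatFunc.X * RatFunc.C τ + 1) * (RatFunc.X * RatFunc.C ρ + 1)) * ωsm)
    (hω : ωsm = -((RatFunc.X * RatFunc.C τ + 1) /
        ((RatFunc.C (2 * H) * RatFunc.X + RatFunc.C αℓ) *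
          (RatFunc.X * RatFunc.C τ + 1) + RatFunc.C αg)) * (pℓ - pvsi)) :
    ωsm = (RatFunc.X * RatFunc.C ρ + 1) /
        (RatFunc.C (2 * H * ρ) * RatFunc.X ^ 2 +
          RatFunc.C (αℓ * ρ + 2 * H) * RatFunc.X +
          RatFunc.C (αℓ + αg)) * (-pℓ) := by
  have hsum : αℓ + αg ≠ 0 := by positivity
  have hτ1 := X_mul_C_add_one_ne_zero τ
  have hρ1 := X_mul_C_add_one_ne_zero ρ
  have hD := C_mul_X_add_C_mul_add_C_ne_zero (a := 2 * H) (c := τ) hsum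
  have hQ := C_mul_X_sq_add_C_mul_X_add_C_ne_zero (a := 2 * H * ρ) (b := αℓ * ρ + 2 * H) hsum
  have hloop := shaping_denominator_identity H αℓ αg τ ρ
  rw [hpv] at hω
  rw [eq_div_one_sub_mul_of_feedback hω
    (by rw [one_sub_div_mul_neg_div_eq hτ1 hρ1 hD hloop]
        exact div_ne_zero (mul_ne_zero hτ1 hQ) (mul_ne_zero hD hρ1)),
    div_one_sub_div_mul_neg_div_eq hτ1 hρ1 hD hQ hloop]

/-- Frequency shaping: the closed loop from -p_ℓ to ω_sm matches the target. -/
theorem shaping_matches_target (H αℓ αg τ ρ : ℝ)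
    (hH : 0 < H) (hαℓ : 0 < αℓ) (hαg : 0 < αg) (hτ : 0 < τ)
    (hρ : 0 ≤ ρ) (hρτ : ρ < τ)
    (pℓ ωsm pvsi : RatFunc ℝ)
    (hpv : pvsi = -(RatFunc.C αg * RatFunc.X * (RatFunc.C τ - RatFunc.C ρ)) /
        ((RatFunc.X * RatFunc.C τ + 1) * (RatFunc.X * RatFunc.C ρ + 1)) * ωsm)
    (hω : ωsm = -((RatFunc.X * RatFunc.C τ + 1) /
        ((RatFunc.C (2 * H) * RatFunc.X + RatFunc.C αℓ) *
          (RatFunc.X * RatFunc.C τ + 1) + RatFunc.C αg)) * (pℓ - pvsi)) :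
    ωsm = (RatFunc.X * RatFunc.C ρ + 1) /
        (RatFunc.C (2 * H * ρ) * RatFunc.X ^ 2 +
          RatFunc.C (αℓ * ρ + 2 * H) * RatFunc.X +
          RatFunc.C (αℓ + αg)) * (-pℓ) :=
  shaping_matches_target_general H αℓ αg τ ρ hαℓ hαg pℓ ωsm pvsi hpv hω
end

section
/- For ρ in N (i.e., α_g·τ/(b̂·τ+α_g) ≤ ρ < τ), all zeros of -G_vsi(s) = -(k_d s² + k_p s + k_i)/s lie in the closed left half plane; conversely if 0 ≤ ρ < α_g·τ/(b̂·τ+α_g) then k_d < 0 and the quadratic k_d s² + k_p s + k_i has a root with positive real part (the controller is non-minimum phase). -/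
/-!
For a real quadratic `a z² + b z + c` with `a ≥ 0` and `b, c > 0`, a root with `Re z > 0` is
impossible: the imaginary part of the equation, `(2 a Re z + b) Im z = 0`, forces the root to be
real, and then every term is positive. If instead `a < 0 < c`, the discriminant exceeds `b²`, so
the real root `(-b - √(b² - 4ac)) / (2a)` is positive. The sign of `k_d` decides which case the
controller is in.
-/

theorem Complex.re_nonpos_of_quadratic_eq_zero {a b c : ℝ} (ha : 0 ≤ a) (hb : 0 < b)
    (hc : 0 ≤ c) {z : ℂ} (hz : (a : ℂ) * z ^ 2 + b * z + c = 0) : z.re ≤ 0 := by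
  have hre : a * (z.re ^ 2 - z.im ^ 2) + b * z.re + c = 0 := by
    simpa [sq] using congrArg Complex.re hz
  have him : (2 * a * z.re + b) * z.im = 0 := by
    have h := congrArg Complex.im hz
    simp only [Complex.add_im, Complex.mul_im, Complex.ofReal_re, Complex.ofReal_im, sq,
      Complex.mul_re, Complex.zero_im] at h
    linear_combination h
  by_contra! hx
  have hy : z.im = 0 := (mul_eq_zero.mp him).resolve_left (by positivity)
  rw [hy] at hre
  nlinarith [mul_nonneg ha (sq_nonneg z.re)]

theorem exists_pos_quadratic_eq_zero_of_neg_of_pos {a c : ℝ} (b : ℝ) (ha : a < 0) (hc : 0 < c) :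
    ∃ x : ℝ, 0 < x ∧ a * (x * x) + b * x + c = 0 := by
  have hdiscr : discrim a b c = √(discrim a b c) * √(discrim a b c) :=
    (Real.mul_self_sqrt (by unfold discrim; nlinarith [sq_nonneg b])).symm
  have hb : |b| < √(discrim a b c) :=
    Real.lt_sqrt_of_sq_lt (by rw [sq_abs]; unfold discrim; nlinarith)
  refine ⟨(-b - √(discrim a b c)) / (2 * a),
    div_pos_of_neg_of_neg (by linarith [neg_abs_le b]) (by linarith), ?_⟩
  exact (quadratic_eq_zero_iff ha.ne hdiscr _).mpr (Or.inr rfl)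

theorem pid_derivative_gain_nonneg_iff {τ ρ αg bhat : ℝ} (hτ : 0 < τ) (hρτ : ρ < τ)
    (hαg : 0 < αg) (hb : 0 < bhat) :
    0 ≤ τ * ρ / (αg * (τ - ρ)) - 1 / bhat ↔ αg * τ / (bhat * τ + αg) ≤ ρ := by
  have hτρ : 0 < αg * (τ - ρ) := mul_pos hαg (sub_pos.mpr hρτ)
  rw [sub_nonneg, div_le_div_iff₀ hb hτρ, div_le_iff₀ (by positivity)]
  constructor <;> intro h <;> nlinarith

/-- Minimum phase iff ρ ∈ N. -/
theorem minimum_phase_iff (τ ρ αg bhat : ℝ)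
    (hτ : 0 < τ) (hρ : 0 ≤ ρ) (hρτ : ρ < τ) (hαg : 0 < αg) (hb : 0 < bhat)
    (kd kp ki : ℝ)
    (hkd : kd = τ * ρ / (αg * (τ - ρ)) - 1 / bhat)
    (hkp : kp = (τ + ρ) / (αg * (τ - ρ)))
    (hki : ki = 1 / (αg * (τ - ρ))) :
    (αg * τ / (bhat * τ + αg) ≤ ρ →
      ∀ z : ℂ, (kd : ℂ) * z ^ 2 + (kp : ℂ) * z + (ki : ℂ) = 0 → z.re ≤ 0) ∧
    (ρ < αg * τ / (bhat * τ + αg) →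
      kd < 0 ∧ ∃ z : ℂ, (kd : ℂ) * z ^ 2 + (kp : ℂ) * z + (ki : ℂ) = 0 ∧
        0 < z.re) := by
  have hkp_pos : 0 < kp := by
    rw [hkp]; exact div_pos (by linarith) (mul_pos hαg (by linarith))
  have hki_pos : 0 < ki := by
    rw [hki]; exact div_pos one_pos (mul_pos hαg (by linarith))
  have hkd_nonneg_iff : 0 ≤ kd ↔ αg * τ / (bhat * τ + αg) ≤ ρ :=
    hkd ▸ pid_derivative_gain_nonneg_iff hτ hρτ hαg hb
  refine ⟨fun hN z hz ↦
    Complex.re_nonpos_of_quadratic_eq_zero (hkd_nonneg_iff.mpr hN) hkp_pos hki_pos.le hz,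
    fun hN ↦ ?_⟩
  have hkd_neg : kd < 0 := lt_of_not_ge fun h ↦ (hkd_nonneg_iff.mp h).not_gt hN
  obtain ⟨x, hx, hroot⟩ := exists_pos_quadratic_eq_zero_of_neg_of_pos kp hkd_neg hki_pos
  refine ⟨hkd_neg, x, ?_, hx⟩
  rw [sq]
  exact_mod_cast hroot
end

section
/- The H∞ norm of S(s) = α_g(τ-ρ)s³/((sρ+1)(sτ+1)²), i.e., sup over ω ∈ ℝ of |S(jω)|, equals α_g(τ-ρ)/(τ²ρ), for α_g > 0 and 0 < ρ < τ. -/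
/-!
Since `|ω| ρ ≤ √(1 + ω²ρ²)` and `ω²τ² ≤ 1 + ω²τ²`, the quotient
`|ω|³ / (√(1 + ω²ρ²) (1 + ω²τ²))` never exceeds `1 / (τ²ρ)`, and it tends to that value as
`ω → ∞`. So the supremum is the (unattained) limit, and the nonnegative gain `α_g (τ - ρ)`
factors out of it.
-/

open Filter Topology

theorem ciSup_eq_of_forall_le_of_tendsto {ι α : Type*} [ConditionallyCompleteLinearOrder α]
    [TopologicalSpace α] [OrderClosedTopology α] {l : Filter ι} [l.NeBot] {f : ι → α} {b : α}
    (hle : ∀ i, f i ≤ b) (hlim : Tendsto f l (𝓝 b)) : ⨆ i, f i = b :=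
  have : Nonempty ι := l.nonempty_of_neBot
  le_antisymm (ciSup_le hle) <|
    le_of_tendsto' hlim fun i => le_ciSup ⟨b, Set.forall_mem_range.2 hle⟩ i

theorem abs_pow_three_div_le {ρ τ : ℝ} (hρ : 0 < ρ) (hτ : τ ≠ 0) (ω : ℝ) :
    |ω| ^ 3 / (√(1 + ω ^ 2 * ρ ^ 2) * (1 + ω ^ 2 * τ ^ 2)) ≤ 1 / (τ ^ 2 * ρ) := by
  have hρω : |ω| * ρ ≤ √(1 + ω ^ 2 * ρ ^ 2) :=
    Real.le_sqrt_of_sq_le (by nlinarith [sq_abs ω])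
  rw [div_le_div_iff₀ (by positivity) (by positivity), one_mul]
  calc |ω| ^ 3 * (τ ^ 2 * ρ) = (|ω| * ρ) * (ω ^ 2 * τ ^ 2) := by rw [← sq_abs ω]; ring
    _ ≤ √(1 + ω ^ 2 * ρ ^ 2) * (1 + ω ^ 2 * τ ^ 2) := by gcongr; linarith

theorem tendsto_abs_pow_three_div_atTop {ρ τ : ℝ} (hρ : 0 < ρ) (hτ : τ ≠ 0) :
    Tendsto (fun ω : ℝ => |ω| ^ 3 / (√(1 + ω ^ 2 * ρ ^ 2) * (1 + ω ^ 2 * τ ^ 2))) atTop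
      (𝓝 (1 / (τ ^ 2 * ρ))) := by
  -- for `ω > 0` the quotient is `h (ω⁻²)`, with `h` continuous at `0`
  set h : ℝ → ℝ := fun x => 1 / (√(x + ρ ^ 2) * (x + τ ^ 2))
  have hcont : ContinuousAt h 0 := by
    refine continuousAt_const.div (by fun_prop) ?_
    simp only [zero_add, Real.sqrt_sq hρ.le]
    positivity
  have h0 : h 0 = 1 / (τ ^ 2 * ρ) := by
    simp only [h, zero_add, Real.sqrt_sq hρ.le, mul_comm]
  have hinv : Tendsto (fun ω : ℝ => ω⁻¹ ^ 2) atTop (𝓝 0) := by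
    simpa using (tendsto_inv_atTop_zero (𝕜 := ℝ)).pow 2
  refine (h0 ▸ hcont.tendsto.comp hinv).congr' ?_
  filter_upwards [eventually_gt_atTop 0] with ω hω
  have hsq : ∀ c : ℝ, ω⁻¹ ^ 2 + c = (1 + ω ^ 2 * c) / ω ^ 2 := fun c => by field_simp
  simp only [Function.comp, h, hsq, Real.sqrt_div' _ (sq_nonneg ω), Real.sqrt_sq hω.le,
    abs_of_pos hω]
  field_simp

/-- The H∞ norm of the sensitivity transfer function. -/
theorem sensitivity_Hinf_norm (αg τ ρ : ℝ)
    (hαg : 0 < αg) (hρ : 0 < ρ) (hρτ : ρ < τ) :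
    (⨆ ω : ℝ, αg * (τ - ρ) * |ω| ^ 3 /
        (Real.sqrt (1 + ω ^ 2 * ρ ^ 2) * (1 + ω ^ 2 * τ ^ 2)))
      = αg * (τ - ρ) / (τ ^ 2 * ρ) := by
  have hτ : τ ≠ 0 := (hρ.trans hρτ).ne'
  have hgain : 0 ≤ αg * (τ - ρ) := mul_nonneg hαg.le (sub_nonneg.2 hρτ.le)
  have hsup : ⨆ ω : ℝ, |ω| ^ 3 / (√(1 + ω ^ 2 * ρ ^ 2) * (1 + ω ^ 2 * τ ^ 2)) =
      1 / (τ ^ 2 * ρ) :=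
    ciSup_eq_of_forall_le_of_tendsto (abs_pow_three_div_le hρ hτ)
      (tendsto_abs_pow_three_div_atTop hρ hτ)
  calc _ = αg * (τ - ρ) * ⨆ ω : ℝ, |ω| ^ 3 / (√(1 + ω ^ 2 * ρ ^ 2) * (1 + ω ^ 2 * τ ^ 2)) := by
        simp only [Real.mul_iSup_of_nonneg hgain, mul_div_assoc]
    _ = _ := by rw [hsup, mul_one_div]
end
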